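/- Let Γ ∈ 𝒢₃(θ0,θ1,θ2) and suppose the vertex set of Γ is partitioned into nonempty sets V1 and V2 such that the induced subgraph on V1 is complete or edgeless, the induced subgraph on V2 is complete or edgeless, and the V1×V2 biadjacency matrix of Γ has constant row sums and constant column sums. Then the coherent rank of Γ is at most 8. -/

import Mathlib

open Matrix

/-- `θ` is an eigenvalue of the (real) adjacency matrix of `G`. -/
def adjEig {V : Type} [Fintype V] [DecidableEq V] (G : SimpleGraph V) [DecidableRel G.Adj]
    (θ : ℝ) : Prop :=
  ∃ f : V → ℝ, f ≠ 0 ∧ (SimpleGraph.adjMatrix ℝ G).mulVec f = θ • f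

/-- `Γ ∈ 𝒢₃(θ0,θ1,θ2)`: `Γ` is connected and the set of eigenvalues of its adjacency
matrix is exactly `{θ0, θ1, θ2}`, where `θ0 > θ1 > θ2`. -/
def InG3 {V : Type} [Fintype V] [DecidableEq V] (G : SimpleGraph V) [DecidableRel G.Adj]
    (θ0 θ1 θ2 : ℝ) : Prop :=
  G.Connected ∧ θ1 < θ0 ∧ θ2 < θ1 ∧ {θ : ℝ | adjEig G θ} = {θ0, θ1, θ2}

/-- A coherent configuration of rank `r` on the finite set `V`, given as a family of
`{0,1}`-matrices `A 1, …, A r`. -/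
def IsCoherentConfig {V : Type} [Fintype V] [DecidableEq V] {r : ℕ}
    (A : Fin r → Matrix V V ℝ) : Prop :=
  (∀ i x y, A i x y = 0 ∨ A i x y = 1) ∧
  (∑ i, A i) = Matrix.of (fun _ _ => (1 : ℝ)) ∧
  (∀ i, ∃ j, (A i)ᵀ = A j) ∧
  (∃ Δ : Finset (Fin r), ∑ i ∈ Δ, A i = 1) ∧
  (∀ i j, A i * A j ∈ Submodule.span ℝ (Set.range A))

/-- The coherent rank of `G` is `n`: `n` is the least rank of a coherent configuration on
the vertex set of `G` whose real linear span contains the adjacency matrix of `G`. -/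
def HasCoherentRank {V : Type} [Fintype V] [DecidableEq V] (G : SimpleGraph V)
    [DecidableRel G.Adj] (n : ℕ) : Prop :=
  IsLeast {r : ℕ | ∃ A : Fin r → Matrix V V ℝ,
    IsCoherentConfig A ∧ SimpleGraph.adjMatrix ℝ G ∈ Submodule.span ℝ (Set.range A)} n

/-!
Split the adjacency matrix `A` into blocks along `V = V1 ⊔ V2`. The eight cells (diagonal and
off-diagonal pairs inside each part, edges and non-edges between the parts) form a coherent
configuration once `A₁₂ A₂₁` and `A₂₁ A₁₂` are combinations of `I` and `J` on their part; every
other product of two cells is settled by the constant row and column counts. As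
`(A²)₁₁ = A₁₁² + A₁₂ A₂₁` and `A₁₁` is a multiple of `J - I`, it suffices that `(A²)₁₁` is such a
combination, and likewise for `V2`.

With three eigenvalues, `M = (A - θ₁)(A - θ₂)` satisfies `A M = θ₀ M`, so each column of `M` is a
`θ₀`-eigenvector. The equitable partition gives a positive eigenvector that is constant on the
parts; by the Perron–Frobenius argument it spans the `θ₀`-eigenspace. Hence `M` is constant on
each block, and so is `A² = M + (θ₁ + θ₂) A - θ₁ θ₂ I` off the diagonal.
-/

open scoped Finset

@[simp]
lemma Matrix.transpose_of_one {m R : Type*} [One R] : (of 1 : Matrix m m R)ᵀ = of 1 := rfl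

section RestrictBlock

variable {V R : Type*} [DecidableEq V] [CommRing R]

def restrictBlock (S T : Finset V) (X : Matrix V V R) : Matrix V V R :=
  of fun x y => if x ∈ S ∧ y ∈ T then X x y else 0

variable {S T U W : Finset V} {X Y : Matrix V V R}

@[simp]
lemma restrictBlock_apply (x y : V) :
    restrictBlock S T X x y = if x ∈ S ∧ y ∈ T then X x y else 0 := rfl

@[simp]
lemma restrictBlock_add :
    restrictBlock S T (X + Y) = restrictBlock S T X + restrictBlock S T Y := by
  ext x y; by_cases h : x ∈ S ∧ y ∈ T <;> simp [h]

@[simp]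
lemma restrictBlock_sub :
    restrictBlock S T (X - Y) = restrictBlock S T X - restrictBlock S T Y := by
  ext x y; by_cases h : x ∈ S ∧ y ∈ T <;> simp [h]

@[simp]
lemma restrictBlock_smul (a : R) : restrictBlock S T (a • X) = a • restrictBlock S T X := by
  ext x y; by_cases h : x ∈ S ∧ y ∈ T <;> simp [h]

lemma restrictBlock_transpose : (restrictBlock S T X)ᵀ = restrictBlock T S Xᵀ := by
  ext x y; simp [and_comm]

lemma restrictBlock_one_of_disjoint (h : Disjoint S T) :
    restrictBlock S T (1 : Matrix V V R) = 0 := by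
  ext x y
  simp only [restrictBlock_apply, one_apply, Matrix.zero_apply, ite_eq_right_iff]
  rintro ⟨hx, hy⟩ rfl
  exact absurd hy (Finset.disjoint_left.1 h hx)

lemma sum_apply_of_restrictBlock_eq_smul {e : R}
    (he : restrictBlock S S X = e • restrictBlock S S (of 1 - 1)) {x : V} (hx : x ∈ S) :
    ∑ z ∈ S, X x z = e * (#S - 1) := by
  calc ∑ z ∈ S, X x z = ∑ z ∈ S, restrictBlock S S X x z :=
        Finset.sum_congr rfl fun z hz => by simp [hx, hz]
    _ = ∑ z ∈ S, (e - if x = z then e else 0) :=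
        Finset.sum_congr rfl fun z hz => by
          rw [he, Matrix.smul_apply, restrictBlock_apply, if_pos ⟨hx, hz⟩]
          simp [one_apply, mul_sub]
    _ = e * (#S - 1) := by simp [Finset.sum_sub_distrib, Finset.sum_ite_eq, hx]; ring

variable [Fintype V]

lemma add_restrictBlocks_of_isCompl (h : IsCompl S T) :
    restrictBlock S S X + restrictBlock S T X + restrictBlock T S X + restrictBlock T T X = X := by
  have hT z : z ∈ T ↔ z ∉ S := by rw [h.symm.eq_compl, Finset.mem_compl]
  ext x y
  by_cases hx : x ∈ S <;> by_cases hy : y ∈ S <;> simp [hx, hy, hT]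

lemma restrictBlock_mul_restrictBlock :
    restrictBlock S T X * restrictBlock T U Y =
      of fun x y => if x ∈ S ∧ y ∈ U then ∑ z ∈ T, X x z * Y z y else 0 := by
  ext x y
  simp only [mul_apply, restrictBlock_apply, of_apply]
  split_ifs with h
  · calc _ = ∑ z, if z ∈ T then X x z * Y z y else 0 :=
          Finset.sum_congr rfl fun z _ => by by_cases hz : z ∈ T <;> simp [hz, h]
      _ = _ := by rw [Finset.sum_ite_mem, Finset.univ_inter]
  · refine Finset.sum_eq_zero fun z _ => ?_
    split_ifs <;> simp_all

lemma restrictBlock_mul_restrictBlock_of_disjoint (h : Disjoint T U) :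
    restrictBlock S T X * restrictBlock U W Y = 0 := by
  ext x y
  refine Finset.sum_eq_zero fun z _ => ?_
  by_cases hz : z ∈ T
  · simp [Finset.disjoint_left.1 h hz]
  · simp [hz]

lemma restrictBlock_mul {T' : Finset V} (h : IsCompl T T') :
    restrictBlock S U (X * Y) =
      restrictBlock S T X * restrictBlock T U Y + restrictBlock S T' X * restrictBlock T' U Y := by
  ext x y
  rw [h.symm.eq_compl, Matrix.add_apply, restrictBlock_mul_restrictBlock,
    restrictBlock_mul_restrictBlock]
  by_cases hxy : x ∈ S ∧ y ∈ U <;> simp [hxy, Finset.sum_add_sum_compl, mul_apply]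

@[simp]
lemma restrictBlock_one_mul : restrictBlock S S 1 * restrictBlock S T X = restrictBlock S T X := by
  ext x y
  rw [restrictBlock_mul_restrictBlock]
  by_cases hx : x ∈ S <;> simp [hx, one_apply]

@[simp]
lemma restrictBlock_mul_one : restrictBlock S T X * restrictBlock T T 1 = restrictBlock S T X := by
  ext x y
  rw [restrictBlock_mul_restrictBlock]
  by_cases hy : y ∈ T <;> simp [hy, one_apply]

@[simp]
lemma restrictBlock_ones_mul_ones :
    restrictBlock S T (of 1 : Matrix V V R) * restrictBlock T U (of 1) =
      (#T : R) • restrictBlock S U (of 1) := by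
  ext x y
  rw [restrictBlock_mul_restrictBlock]
  simp

lemma exists_restrictBlock_mul_restrictBlock_eq (h : IsCompl S T) {A : Matrix V V R}
    {θ₁ θ₂ m e : R}
    (hm : restrictBlock S S ((A - θ₁ • 1) * (A - θ₂ • 1)) = m • restrictBlock S S (of 1))
    (he : restrictBlock S S A = e • restrictBlock S S (of 1 - 1)) :
    ∃ a b : R, restrictBlock S T A * restrictBlock T S A =
      a • restrictBlock S S 1 + b • restrictBlock S S (of 1) := by
  have hA2 : A * A = (A - θ₁ • 1) * (A - θ₂ • 1) + (θ₁ + θ₂) • A - (θ₁ * θ₂) • 1 := by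
    simp only [sub_mul, mul_sub, Matrix.smul_mul, Matrix.mul_smul, one_mul, mul_one]
    module
  have hsq := restrictBlock_mul h (S := S) (U := S) (X := A) (Y := A)
  rw [hA2, restrictBlock_sub, restrictBlock_add, restrictBlock_smul, restrictBlock_smul, hm, he]
    at hsq
  simp only [restrictBlock_sub, Matrix.smul_mul, Matrix.mul_smul, sub_mul, mul_sub,
    restrictBlock_ones_mul_ones, restrictBlock_one_mul, restrictBlock_mul_one] at hsq
  refine ⟨-(θ₁ + θ₂) * e - θ₁ * θ₂ - e ^ 2, m + (θ₁ + θ₂) * e - e ^ 2 * (#S - 2), ?_⟩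
  linear_combination (norm := module) (-1 : R) • hsq

end RestrictBlock

section AdjacencyBlocks

variable {V R : Type*} [Fintype V] [DecidableEq V] [CommRing R]
  {G : SimpleGraph V} [DecidableRel G.Adj] {S T : Finset V}

lemma restrictBlock_adjMatrix_mul_ones {r : ℕ} (hr : ∀ x ∈ S, #{y ∈ T | G.Adj x y} = r)
    (U : Finset V) :
    restrictBlock S T (G.adjMatrix R) * restrictBlock T U (of 1) =
      (r : R) • restrictBlock S U (of 1) := by
  ext x y
  rw [restrictBlock_mul_restrictBlock]
  by_cases hxy : x ∈ S ∧ y ∈ U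
  · simp [hxy, ← hr x hxy.1, SimpleGraph.adjMatrix_apply, Finset.sum_boole]
  · simp [hxy]

lemma restrictBlock_ones_mul_adjMatrix {c : ℕ} (hc : ∀ y ∈ T, #{x ∈ S | G.Adj x y} = c)
    (U : Finset V) :
    restrictBlock U S (of 1) * restrictBlock S T (G.adjMatrix R) =
      (c : R) • restrictBlock U T (of 1) := by
  ext x y
  rw [restrictBlock_mul_restrictBlock]
  by_cases hxy : x ∈ U ∧ y ∈ T
  · simp [hxy, ← hc y hxy.2, SimpleGraph.adjMatrix_apply, Finset.sum_boole]
  · simp [hxy]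

end AdjacencyBlocks

section PartitionCells

variable {V : Type} [DecidableEq V] (G : SimpleGraph V) [DecidableRel G.Adj] (S T : Finset V)

def partitionCells : Fin 8 → Matrix V V ℝ :=
  ![restrictBlock S S 1, restrictBlock T T 1,
    restrictBlock S S (of 1 - 1), restrictBlock T T (of 1 - 1),
    restrictBlock S T (G.adjMatrix ℝ), restrictBlock S T (of 1 - G.adjMatrix ℝ),
    restrictBlock T S (G.adjMatrix ℝ), restrictBlock T S (of 1 - G.adjMatrix ℝ)]

variable {G S T}

lemma partitionCells_apply_eq_zero_or_one (i : Fin 8) (x y : V) :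
    partitionCells G S T i x y = 0 ∨ partitionCells G S T i x y = 1 := by
  fin_cases i <;>
    simp only [partitionCells, Fin.reduceFinMk, Matrix.cons_val, restrictBlock_apply,
      Matrix.sub_apply, of_apply, Pi.one_apply, one_apply, SimpleGraph.adjMatrix_apply] <;>
    split_ifs <;> norm_num

lemma exists_transpose_partitionCells_eq (i : Fin 8) :
    ∃ j, (partitionCells G S T i)ᵀ = partitionCells G S T j := by
  refine ⟨![0, 1, 2, 3, 6, 7, 4, 5] i, ?_⟩
  fin_cases i <;> simp [partitionCells, restrictBlock_transpose]

variable [Fintype V]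

lemma sum_partitionCells (h : IsCompl S T) : ∑ i, partitionCells G S T i = of 1 := by
  rw [Fin.sum_univ_eight]
  conv_rhs => rw [← add_restrictBlocks_of_isCompl h (X := of 1)]
  simp only [partitionCells, Fin.isValue, Matrix.cons_val, restrictBlock_sub]
  abel

lemma partitionCells_zero_add_one (h : IsCompl S T) :
    partitionCells G S T 0 + partitionCells G S T 1 = 1 := by
  conv_rhs => rw [← add_restrictBlocks_of_isCompl h (X := 1)]
  simp [partitionCells, restrictBlock_one_of_disjoint h.disjoint,
    restrictBlock_one_of_disjoint h.disjoint.symm]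

lemma mul_partitionCells_mem_span (h : IsCompl S T) {r c : ℕ}
    (hr : ∀ x ∈ S, #{y ∈ T | G.Adj x y} = r) (hc : ∀ y ∈ T, #{x ∈ S | G.Adj x y} = c)
    (hS : ∃ a b : ℝ, restrictBlock S T (G.adjMatrix ℝ) * restrictBlock T S (G.adjMatrix ℝ) =
      a • restrictBlock S S 1 + b • restrictBlock S S (of 1))
    (hT : ∃ a b : ℝ, restrictBlock T S (G.adjMatrix ℝ) * restrictBlock S T (G.adjMatrix ℝ) =
      a • restrictBlock T T 1 + b • restrictBlock T T (of 1))
    (i j : Fin 8) :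
    partitionCells G S T i * partitionCells G S T j ∈
      Submodule.span ℝ (Set.range (partitionCells G S T)) := by
  set W := Submodule.span ℝ (Set.range (partitionCells G S T))
  have mem i : partitionCells G S T i ∈ W := Submodule.subset_span ⟨i, rfl⟩
  have hDS : restrictBlock S S 1 ∈ W := mem 0
  have hDT : restrictBlock T T 1 ∈ W := mem 1
  have hJSS : restrictBlock S S (of 1) ∈ W := by
    simpa [partitionCells] using add_mem (mem 2) (mem 0)
  have hJTT : restrictBlock T T (of 1) ∈ W := by
    simpa [partitionCells] using add_mem (mem 3) (mem 1)
  have hAST : restrictBlock S T (G.adjMatrix ℝ) ∈ W := mem 4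
  have hJST : restrictBlock S T (of 1) ∈ W := by
    simpa [partitionCells] using add_mem (mem 5) (mem 4)
  have hATS : restrictBlock T S (G.adjMatrix ℝ) ∈ W := mem 6
  have hJTS : restrictBlock T S (of 1) ∈ W := by
    simpa [partitionCells] using add_mem (mem 7) (mem 6)
  have hr' : ∀ y ∈ S, #{x ∈ T | G.Adj x y} = r := by simpa only [G.adj_comm] using hr
  have hc' : ∀ x ∈ T, #{y ∈ S | G.Adj x y} = c := by simpa only [G.adj_comm] using hc
  obtain ⟨a, b, hAAS⟩ := hS
  obtain ⟨a', b', hAAT⟩ := hT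
  -- Each product of two blocks vanishes (disjoint inner index), is absorbed by a diagonal
  -- block, or is evaluated by a row/column count or by `hAAS`, `hAAT`.
  fin_cases i <;> fin_cases j <;>
    simp only [partitionCells, Fin.reduceFinMk, Matrix.cons_val, restrictBlock_sub, mul_sub,
      sub_mul, restrictBlock_one_mul, restrictBlock_mul_one, restrictBlock_ones_mul_ones,
      restrictBlock_adjMatrix_mul_ones hr, restrictBlock_adjMatrix_mul_ones hc',
      restrictBlock_ones_mul_adjMatrix hc, restrictBlock_ones_mul_adjMatrix hr', hAAS, hAAT,
      restrictBlock_mul_restrictBlock_of_disjoint h.disjoint,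
      restrictBlock_mul_restrictBlock_of_disjoint h.disjoint.symm, sub_self] <;>
    repeat' with_reducible first
      | assumption | exact zero_mem _ | apply add_mem | apply sub_mem | apply neg_mem
      | apply Submodule.smul_mem

theorem isCoherentConfig_partitionCells (h : IsCompl S T) {r c : ℕ}
    (hr : ∀ x ∈ S, #{y ∈ T | G.Adj x y} = r) (hc : ∀ y ∈ T, #{x ∈ S | G.Adj x y} = c)
    (hS : ∃ a b : ℝ, restrictBlock S T (G.adjMatrix ℝ) * restrictBlock T S (G.adjMatrix ℝ) =
      a • restrictBlock S S 1 + b • restrictBlock S S (of 1))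
    (hT : ∃ a b : ℝ, restrictBlock T S (G.adjMatrix ℝ) * restrictBlock S T (G.adjMatrix ℝ) =
      a • restrictBlock T T 1 + b • restrictBlock T T (of 1)) :
    IsCoherentConfig (partitionCells G S T) :=
  ⟨partitionCells_apply_eq_zero_or_one, sum_partitionCells h, exists_transpose_partitionCells_eq,
    ⟨{0, 1}, by rw [Finset.sum_pair (by decide)]; exact partitionCells_zero_add_one h⟩,
    mul_partitionCells_mem_span h hr hc hS hT⟩

lemma adjMatrix_mem_span_partitionCells (h : IsCompl S T) {e₁ e₂ : ℝ}
    (he₁ : restrictBlock S S (G.adjMatrix ℝ) = e₁ • restrictBlock S S (of 1 - 1))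
    (he₂ : restrictBlock T T (G.adjMatrix ℝ) = e₂ • restrictBlock T T (of 1 - 1)) :
    G.adjMatrix ℝ ∈ Submodule.span ℝ (Set.range (partitionCells G S T)) := by
  have mem i : partitionCells G S T i ∈ Submodule.span ℝ (Set.range (partitionCells G S T)) :=
    Submodule.subset_span ⟨i, rfl⟩
  rw [← add_restrictBlocks_of_isCompl h (X := G.adjMatrix ℝ), he₁, he₂]
  exact add_mem (add_mem (add_mem (Submodule.smul_mem _ _ (mem 2)) (mem 4)) (mem 6))
    (Submodule.smul_mem _ _ (mem 3))

end PartitionCells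

lemma exists_restrictBlock_adjMatrix_eq_smul {V : Type*} [DecidableEq V] {G : SimpleGraph V}
    [DecidableRel G.Adj] {S : Finset V}
    (h : (∀ x ∈ S, ∀ y ∈ S, x ≠ y → G.Adj x y) ∨ ∀ x ∈ S, ∀ y ∈ S, ¬G.Adj x y) :
    ∃ e : ℝ, restrictBlock S S (G.adjMatrix ℝ) = e • restrictBlock S S (of 1 - 1) := by
  rcases h with h | h
  · refine ⟨1, ?_⟩
    ext x y
    by_cases hxy : x ∈ S ∧ y ∈ S
    · by_cases hne : x = y
      · simp [hxy, hne]
      · simp [hxy, hne, one_apply, h x hxy.1 y hxy.2 hne]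
    · simp [hxy]
  · refine ⟨0, ?_⟩
    ext x y
    by_cases hxy : x ∈ S ∧ y ∈ S
    · simp [hxy, h x hxy.1 y hxy.2]
    · simp [hxy]

namespace SimpleGraph

section Perron

variable {V : Type*} [Fintype V] {G : SimpleGraph V} [DecidableRel G.Adj]
  {f g : V → ℝ} {θ μ : ℝ}

lemma mul_abs_le_adjMatrix_mulVec_abs (hf : G.adjMatrix ℝ *ᵥ f = θ • f) (x : V) :
    θ * |f x| ≤ (G.adjMatrix ℝ *ᵥ |f|) x := by
  calc θ * |f x| ≤ |θ * f x| := by rw [abs_mul]; gcongr; exact le_abs_self θ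
    _ = |∑ y ∈ G.neighborFinset x, f y| := by
      rw [← adjMatrix_mulVec_apply, hf, Pi.smul_apply, smul_eq_mul]
    _ ≤ ∑ y ∈ G.neighborFinset x, |f y| := Finset.abs_sum_le_sum_abs _ _
    _ = (G.adjMatrix ℝ *ᵥ |f|) x := by rw [adjMatrix_mulVec_apply]; rfl

lemma dotProduct_adjMatrix_mulVec_sub_smul (hg : G.adjMatrix ℝ *ᵥ g = μ • g) (h : V → ℝ) :
    g ⬝ᵥ (G.adjMatrix ℝ *ᵥ h - θ • h) = (μ - θ) * (g ⬝ᵥ h) := by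
  rw [dotProduct_sub, dotProduct_mulVec, ← G.transpose_adjMatrix, vecMul_transpose, hg,
    smul_dotProduct, dotProduct_smul, smul_eq_mul, smul_eq_mul, sub_mul]

lemma le_of_pos_eigenvector (hg0 : ∀ x, 0 < g x) (hg : G.adjMatrix ℝ *ᵥ g = μ • g)
    (hf0 : f ≠ 0) (hf : G.adjMatrix ℝ *ᵥ f = θ • f) : θ ≤ μ := by
  have hnonneg : 0 ≤ (μ - θ) * (g ⬝ᵥ |f|) := by
    rw [← dotProduct_adjMatrix_mulVec_sub_smul hg]
    exact Finset.sum_nonneg fun x _ =>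
      mul_nonneg (hg0 x).le (sub_nonneg.2 (mul_abs_le_adjMatrix_mulVec_abs hf x))
  obtain ⟨x, hx⟩ := Function.ne_iff.1 hf0
  have hpos : 0 < g ⬝ᵥ |f| := Finset.sum_pos' (fun y _ => mul_nonneg (hg0 y).le (abs_nonneg _))
    ⟨x, Finset.mem_univ x, mul_pos (hg0 x) (abs_pos.2 hx)⟩
  linarith [nonneg_of_mul_nonneg_left hnonneg hpos]

lemma adjMatrix_mulVec_abs_of_pos_eigenvector (hg0 : ∀ x, 0 < g x)
    (hg : G.adjMatrix ℝ *ᵥ g = μ • g) (hf : G.adjMatrix ℝ *ᵥ f = μ • f) :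
    G.adjMatrix ℝ *ᵥ |f| = μ • |f| := by
  have hterm : ∀ x, 0 ≤ g x * (G.adjMatrix ℝ *ᵥ |f| - μ • |f|) x := fun x =>
    mul_nonneg (hg0 x).le (sub_nonneg.2 (mul_abs_le_adjMatrix_mulVec_abs hf x))
  have hsum := dotProduct_adjMatrix_mulVec_sub_smul (θ := μ) hg |f|
  rw [sub_self, zero_mul, dotProduct, Finset.sum_eq_zero_iff_of_nonneg fun x _ => hterm x] at hsum
  ext x
  exact sub_eq_zero.1 ((mul_eq_zero.1 (hsum x (Finset.mem_univ x))).resolve_left (hg0 x).ne')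

lemma Connected.eq_zero_of_nonneg_eigenvector (hG : G.Connected) {h : V → ℝ} (h0 : 0 ≤ h)
    (hh : G.adjMatrix ℝ *ᵥ h = θ • h) {x : V} (hx : h x = 0) : h = 0 := by
  have step : ∀ u v, G.Adj u v → h u = 0 → h v = 0 := fun u v huv hu => by
    have : ∑ w ∈ G.neighborFinset u, h w = 0 := by
      rw [← adjMatrix_mulVec_apply, hh, Pi.smul_apply, hu, smul_zero]
    exact (Finset.sum_eq_zero_iff_of_nonneg fun w _ => h0 w).1 this v (by simpa using huv)
  ext y
  obtain ⟨p⟩ := hG.preconnected x y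
  induction p with
  | nil => exact hx
  | cons huv _ ih => exact ih (step _ _ huv hx)

lemma Connected.exists_eq_smul_of_pos_eigenvector (hG : G.Connected) (hg0 : ∀ x, 0 < g x)
    (hg : G.adjMatrix ℝ *ᵥ g = μ • g) (hf : G.adjMatrix ℝ *ᵥ f = μ • f) :
    ∃ a : ℝ, f = a • g := by
  obtain ⟨x⟩ := hG.nonempty
  refine ⟨f x / g x, sub_eq_zero.1 ?_⟩
  set f' := f - (f x / g x) • g
  have hf' : G.adjMatrix ℝ *ᵥ f' = μ • f' := by
    rw [mulVec_sub, mulVec_smul, hf, hg, smul_sub, smul_comm]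
  have habs := hG.eq_zero_of_nonneg_eigenvector (abs_nonneg f')
    (adjMatrix_mulVec_abs_of_pos_eigenvector hg0 hg hf') (x := x)
    (by simp [f', div_mul_cancel₀ _ (hg0 x).ne'])
  ext y
  simpa using congrFun habs y

end Perron

end SimpleGraph

lemma Matrix.exists_pos_mulVec_eq_smul_of_isCompl {V : Type*} [Fintype V] [DecidableEq V]
    {A : Matrix V V ℝ} {S T : Finset V} (h : IsCompl S T) {a₁ a₂ r c : ℝ} (hr0 : 0 < r)
    (hc0 : 0 < c)
    (h₁₁ : ∀ x ∈ S, ∑ z ∈ S, A x z = a₁) (h₁₂ : ∀ x ∈ S, ∑ z ∈ T, A x z = r)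
    (h₂₁ : ∀ x ∈ T, ∑ z ∈ S, A x z = c) (h₂₂ : ∀ x ∈ T, ∑ z ∈ T, A x z = a₂) :
    ∃ μ s t : ℝ, 0 < s ∧ 0 < t ∧
      A *ᵥ (fun x => if x ∈ S then s else t) = μ • fun x => if x ∈ S then s else t := by
  -- `μ` is the larger root of `(μ - a₁) (μ - a₂) = r c`, the Perron root of the quotient matrix
  set q := √((a₁ - a₂) ^ 2 + 4 * r * c)
  have hq : q ^ 2 = (a₁ - a₂) ^ 2 + 4 * r * c := Real.sq_sqrt (by positivity)
  have hq' : |a₁ - a₂| < q := by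
    rw [← Real.sqrt_sq_eq_abs]
    exact Real.sqrt_lt_sqrt (sq_nonneg _) (by nlinarith [mul_pos hr0 hc0])
  set μ := (a₁ + a₂ + q) / 2
  have hμ : 0 < μ - a₁ := by
    simp only [μ]; linarith [le_abs_self (a₁ - a₂)]
  refine ⟨μ, r, μ - a₁, hr0, hμ, ?_⟩
  have hT : ∀ z ∈ T, z ∉ S := fun z hz => Finset.disjoint_right.1 h.disjoint hz
  ext x
  have hsplit : (A *ᵥ fun x => if x ∈ S then r else μ - a₁) x =
      (∑ z ∈ S, A x z) * r + (∑ z ∈ T, A x z) * (μ - a₁) := by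
    rw [mulVec, dotProduct, ← Finset.sum_add_sum_compl S, ← h.symm.eq_compl, Finset.sum_mul,
      Finset.sum_mul]
    congr 1 <;> refine Finset.sum_congr rfl fun z hz => ?_
    · rw [if_pos hz]
    · rw [if_neg (hT z hz)]
  rw [hsplit, Pi.smul_apply, smul_eq_mul]
  by_cases hx : x ∈ S
  · rw [h₁₁ x hx, h₁₂ x hx, if_pos hx]; ring
  · have hxT : x ∈ T := by rw [h.symm.eq_compl]; exact Finset.mem_compl.2 hx
    rw [h₂₁ x hxT, h₂₂ x hxT, if_neg hx]
    linear_combination (-1/4 : ℝ) * hq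

lemma SimpleGraph.Connected.exists_adj_of_isCompl {V : Type*} [Fintype V] [DecidableEq V]
    {G : SimpleGraph V} (hG : G.Connected) {S T : Finset V} (h : IsCompl S T)
    (hS : S.Nonempty) (hT : T.Nonempty) : ∃ x ∈ S, ∃ y ∈ T, G.Adj x y := by
  obtain ⟨x, hx⟩ := hS
  obtain ⟨y, hy⟩ := hT
  obtain ⟨p⟩ := hG.preconnected x y
  obtain ⟨d, -, hd₁, hd₂⟩ := p.exists_boundary_dart (S : Set V) hx
    (Finset.disjoint_right.1 h.disjoint hy)
  refine ⟨d.fst, hd₁, d.snd, ?_, d.adj⟩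
  rw [h.symm.eq_compl]
  exact Finset.mem_compl.2 hd₂

lemma SimpleGraph.sum_adjMatrix_apply_eq_card {V : Type*} [Fintype V] (G : SimpleGraph V)
    [DecidableRel G.Adj] (x : V) (T : Finset V) :
    ∑ z ∈ T, G.adjMatrix ℝ x z = #{z ∈ T | G.Adj x z} := by
  simp [SimpleGraph.adjMatrix_apply, Finset.sum_boole]

lemma SimpleGraph.Connected.exists_pos_eigenvector_of_isCompl {V : Type*} [Fintype V]
    [DecidableEq V] {G : SimpleGraph V} [DecidableRel G.Adj] (hG : G.Connected)
    {S T : Finset V} (h : IsCompl S T) (hS : S.Nonempty) (hT : T.Nonempty) {e₁ e₂ : ℝ}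
    (he₁ : restrictBlock S S (G.adjMatrix ℝ) = e₁ • restrictBlock S S (of 1 - 1))
    (he₂ : restrictBlock T T (G.adjMatrix ℝ) = e₂ • restrictBlock T T (of 1 - 1)) {r c : ℕ}
    (hr : ∀ x ∈ S, #{y ∈ T | G.Adj x y} = r) (hc : ∀ y ∈ T, #{x ∈ S | G.Adj x y} = c) :
    ∃ μ s t : ℝ, 0 < s ∧ 0 < t ∧ G.adjMatrix ℝ *ᵥ (fun x => if x ∈ S then s else t) =
      μ • fun x => if x ∈ S then s else t := by
  obtain ⟨x, hx, y, hy, hxy⟩ := hG.exists_adj_of_isCompl h hS hT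
  have hr0 : 0 < r := hr x hx ▸ Finset.card_pos.2 ⟨y, by simp [hy, hxy]⟩
  have hc0 : 0 < c := hc y hy ▸ Finset.card_pos.2 ⟨x, by simp [hx, hxy]⟩
  refine Matrix.exists_pos_mulVec_eq_smul_of_isCompl h (Nat.cast_pos.2 hr0) (Nat.cast_pos.2 hc0)
    (fun x hx => sum_apply_of_restrictBlock_eq_smul he₁ hx) (fun x hx => ?_) (fun y hy => ?_)
    (fun x hx => sum_apply_of_restrictBlock_eq_smul he₂ hx)
  · rw [G.sum_adjMatrix_apply_eq_card, hr x hx]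
  · rw [G.sum_adjMatrix_apply_eq_card, ← hc y hy]
    simp only [G.adj_comm]

section ThreeEigenvalues

variable {n : Type*} [Fintype n] [DecidableEq n]

lemma Matrix.IsHermitian.mul_sub_smul_one_eq_zero {A : Matrix n n ℝ} (hA : A.IsHermitian)
    {θ₀ θ₁ θ₂ : ℝ}
    (hspec : ∀ θ (f : n → ℝ), f ≠ 0 → A *ᵥ f = θ • f → θ = θ₀ ∨ θ = θ₁ ∨ θ = θ₂) :
    (A - θ₀ • 1) * ((A - θ₁ • 1) * (A - θ₂ • 1)) = 0 := by
  set P := (A - θ₀ • 1) * ((A - θ₁ • 1) * (A - θ₂ • 1))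
  have hbasis : ∀ j, P *ᵥ ⇑(hA.eigenvectorBasis j) = 0 := fun j => by
    set v := ⇑(hA.eigenvectorBasis j)
    have hv : A *ᵥ v = hA.eigenvalues j • v := hA.mulVec_eigenvectorBasis j
    have hfactor : ∀ c : ℝ, (A - c • 1) *ᵥ v = (hA.eigenvalues j - c) • v := fun c => by
      rw [sub_mulVec, hv, smul_mulVec, one_mulVec, sub_smul]
    have hv0 : v ≠ 0 := fun h0 =>
      hA.eigenvectorBasis.orthonormal.ne_zero j (by ext k; exact congrFun h0 k)
    have hroot :
        (hA.eigenvalues j - θ₂) * (hA.eigenvalues j - θ₁) * (hA.eigenvalues j - θ₀) = 0 := by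
      rcases hspec _ v hv0 hv with h | h | h <;> rw [h] <;> ring
    simp only [P, ← mulVec_mulVec, hfactor, mulVec_smul, smul_smul, hroot, zero_smul]
  have hlin : P.mulVecLin = 0 :=
    (hA.eigenvectorBasis.toBasis.map (WithLp.linearEquiv 2 ℝ (n → ℝ))).ext fun j => by
      simpa using hbasis j
  ext x y
  simpa using congrFun (congrArg (· (Pi.single y 1)) hlin) x

end ThreeEigenvalues

lemma Matrix.IsSymm.apply_eq_of_col_eq_smul {n : Type*} {M : Matrix n n ℝ} (hM : M.IsSymm)
    {g : n → ℝ} (hcol : ∀ y, ∃ a : ℝ, (fun x => M x y) = a • g) {x x' y y' : n}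
    (hx : g x = g x') (hy : g y = g y') : M x y = M x' y' := by
  have hrow : ∀ x y y', g y = g y' → M x y = M x y' := fun x y y' hy => by
    obtain ⟨a, ha⟩ := hcol x
    rw [← hM.apply x y, ← hM.apply x y', congrFun ha y, congrFun ha y', Pi.smul_apply,
      Pi.smul_apply, hy]
  rw [hrow x y y' hy, ← hM.apply x y', ← hM.apply x' y', hrow y' x x' hx]

section GraphsWithThreeEigenvalues

variable {V : Type} [Fintype V] [DecidableEq V] {G : SimpleGraph V} [DecidableRel G.Adj]
  {θ₀ θ₁ θ₂ : ℝ}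

lemma InG3.adjMatrix_mul_eq_smul (hG : InG3 G θ₀ θ₁ θ₂) :
    G.adjMatrix ℝ * ((G.adjMatrix ℝ - θ₁ • 1) * (G.adjMatrix ℝ - θ₂ • 1)) =
      θ₀ • ((G.adjMatrix ℝ - θ₁ • 1) * (G.adjMatrix ℝ - θ₂ • 1)) := by
  have hspec θ (f : V → ℝ) (hf0 : f ≠ 0) (hf : G.adjMatrix ℝ *ᵥ f = θ • f) :
      θ = θ₀ ∨ θ = θ₁ ∨ θ = θ₂ := by
    have : θ ∈ ({θ₀, θ₁, θ₂} : Set ℝ) := hG.2.2.2 ▸ ⟨f, hf0, hf⟩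
    simpa using this
  have := (G.isHermitian_adjMatrix (R := ℝ)).mul_sub_smul_one_eq_zero hspec
  rwa [sub_mul, smul_mul, one_mul, sub_eq_zero] at this

lemma InG3.eq_of_pos_eigenvector (hG : InG3 G θ₀ θ₁ θ₂) {g : V → ℝ} {μ : ℝ}
    (hg0 : ∀ x, 0 < g x) (hg : G.adjMatrix ℝ *ᵥ g = μ • g) : μ = θ₀ := by
  obtain ⟨hconn, h₁₀, h₂₁, hspec⟩ := hG
  have hμ : μ ∈ ({θ₀, θ₁, θ₂} : Set ℝ) := by
    obtain ⟨x⟩ := hconn.nonempty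
    exact hspec ▸ ⟨g, fun h0 => (hg0 x).ne' (congrFun h0 x), hg⟩
  obtain ⟨f, hf0, hf⟩ : θ₀ ∈ {θ | adjEig G θ} := hspec ▸ Set.mem_insert θ₀ _
  have := SimpleGraph.le_of_pos_eigenvector hg0 hg hf0 hf
  rcases hμ with h | h | h <;> subst h <;> linarith

lemma InG3.exists_restrictBlock_eq_smul (hG : InG3 G θ₀ θ₁ θ₂) {g : V → ℝ} {μ : ℝ}
    (hg0 : ∀ x, 0 < g x) (hg : G.adjMatrix ℝ *ᵥ g = μ • g) {S : Finset V}
    (hS : ∀ x ∈ S, ∀ y ∈ S, g x = g y) :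
    ∃ m : ℝ, restrictBlock S S ((G.adjMatrix ℝ - θ₁ • 1) * (G.adjMatrix ℝ - θ₂ • 1)) =
      m • restrictBlock S S (of 1) := by
  set A := G.adjMatrix ℝ
  set M := (A - θ₁ • 1) * (A - θ₂ • 1)
  rcases S.eq_empty_or_nonempty with rfl | ⟨x₀, hx₀⟩
  · exact ⟨0, by ext; simp⟩
  have hM : M.IsSymm := by
    simp only [IsSymm, M, transpose_mul, transpose_sub, transpose_smul, transpose_one, A,
      G.transpose_adjMatrix, sub_mul, mul_sub, Matrix.smul_mul, Matrix.mul_smul, one_mul, mul_one]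
  have hcol y : ∃ a : ℝ, (fun x => M x y) = a • g := by
    refine hG.1.exists_eq_smul_of_pos_eigenvector hg0 hg ?_
    rw [hG.eq_of_pos_eigenvector hg0 hg]
    ext x
    exact congrFun (congrFun hG.adjMatrix_mul_eq_smul x) y
  refine ⟨M x₀ x₀, ?_⟩
  ext x y
  by_cases hxy : x ∈ S ∧ y ∈ S
  · simpa [hxy] using hM.apply_eq_of_col_eq_smul hcol (hS x hxy.1 x₀ hx₀) (hS y hxy.2 x₀ hx₀)
  · simp [hxy]

end GraphsWithThreeEigenvalues

/-- If the vertex set of `Γ ∈ 𝒢₃` splits into nonempty parts `V1`, `V2` with each induced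
subgraph complete or edgeless and the biadjacency matrix having constant row and column
sums, then the coherent rank of `Γ` is at most `8`. -/
theorem stmt6 {V : Type} [Fintype V] [DecidableEq V] (G : SimpleGraph V) [DecidableRel G.Adj]
    (θ0 θ1 θ2 : ℝ) (h : InG3 G θ0 θ1 θ2)
    (V1 V2 : Finset V) (hV1 : V1.Nonempty) (hV2 : V2.Nonempty)
    (hdisj : Disjoint V1 V2) (hcover : V1 ∪ V2 = Finset.univ)
    (h1 : (∀ x ∈ V1, ∀ y ∈ V1, x ≠ y → G.Adj x y) ∨ (∀ x ∈ V1, ∀ y ∈ V1, ¬ G.Adj x y))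
    (h2 : (∀ x ∈ V2, ∀ y ∈ V2, x ≠ y → G.Adj x y) ∨ (∀ x ∈ V2, ∀ y ∈ V2, ¬ G.Adj x y))
    (hrow : ∃ r : ℕ, ∀ x ∈ V1, (V2.filter (fun y => G.Adj x y)).card = r)
    (hcol : ∃ c : ℕ, ∀ y ∈ V2, (V1.filter (fun x => G.Adj x y)).card = c) :
    ∃ n ≤ 8, ∃ A : Fin n → Matrix V V ℝ,
      IsCoherentConfig A ∧ SimpleGraph.adjMatrix ℝ G ∈ Submodule.span ℝ (Set.range A) := by
  have hST : IsCompl V1 V2 := ⟨hdisj, codisjoint_iff.2 (by simpa using hcover)⟩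
  obtain ⟨r, hr⟩ := hrow
  obtain ⟨c, hc⟩ := hcol
  obtain ⟨e₁, he₁⟩ := exists_restrictBlock_adjMatrix_eq_smul h1
  obtain ⟨e₂, he₂⟩ := exists_restrictBlock_adjMatrix_eq_smul h2
  obtain ⟨μ, s, t, hs, ht, hg⟩ := h.1.exists_pos_eigenvector_of_isCompl hST hV1 hV2 he₁ he₂ hr hc
  have hg0 x : 0 < if x ∈ V1 then s else t := by split_ifs <;> assumption
  obtain ⟨m₁, hm₁⟩ := h.exists_restrictBlock_eq_smul hg0 hg (S := V1) fun x hx y hy => by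
    simp [hx, hy]
  obtain ⟨m₂, hm₂⟩ := h.exists_restrictBlock_eq_smul hg0 hg (S := V2) fun x hx y hy => by
    simp [Finset.disjoint_right.1 hdisj hx, Finset.disjoint_right.1 hdisj hy]
  exact ⟨8, le_rfl, partitionCells G V1 V2,
    isCoherentConfig_partitionCells hST hr hc
      (exists_restrictBlock_mul_restrictBlock_eq hST hm₁ he₁)
      (exists_restrictBlock_mul_restrictBlock_eq hST.symm hm₂ he₂),
    adjMatrix_mem_span_partitionCells hST he₁ he₂⟩
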